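/- Let F be a field of characteristic 0 and n, d ≥ 1. Let f ∈ F_{Ā,C̄}[X] have degree ≤ d and suppose f ∉ I_comm (i.e., the image of f in the free commutative nonassociative algebra F_{Ā,C}[X] is nonzero). Then the evaluation of f at (Z_1,…,Z_n) in C'_d(R) under the anticommutator product ⊙ is nonzero. -/

import Mathlib

noncomputable section

open scoped BigOperators

namespace NAPIT

/-- The list of (leaf label, leaf level) pairs of a nonassociative monomial (element of the
free magma), in left-to-right order, where the root of the monomial is at level `s`. -/
def leafData {n : ℕ} : FreeMagma (Fin n) → ℕ → List (Fin n × ℕ)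
  | FreeMagma.of i, s => [(i, s)]
  | FreeMagma.mul x y, s => leafData x (s + 1) ++ leafData y (s + 1)

/-- The degree (number of leaves) of a nonassociative monomial. -/
def degM {n : ℕ} : FreeMagma (Fin n) → ℕ
  | FreeMagma.of _ => 1
  | FreeMagma.mul x y => degM x + degM y

/-- The depth of a nonassociative monomial (root at level 1; the depth is the maximal level
of a leaf). -/
def depthM {n : ℕ} : FreeMagma (Fin n) → ℕ
  | FreeMagma.of _ => 1
  | FreeMagma.mul x y => max (depthM x) (depthM y) + 1

/-- Evaluation of a nonassociative monomial at `b : Fin n → A`, using `mul` as the product on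
`A`; this is the unique magma homomorphism `FreeMagma (Fin n) → (A, mul)` with `x_i ↦ b i`. -/
def evalWith {n : ℕ} {A : Type*} (mul : A → A → A) (b : Fin n → A) : FreeMagma (Fin n) → A
  | FreeMagma.of i => b i
  | FreeMagma.mul x y => mul (evalWith mul b x) (evalWith mul b y)

/-- The multiset of all variants `m_ε` of a monomial `m`, where `ε` ranges over all choices of
a Boolean for each internal node of `m`, and `m_ε` is obtained from `m` by swapping the two
children at exactly those internal nodes where `ε` is true (counted with multiplicity). -/
def variants {n : ℕ} : FreeMagma (Fin n) → Multiset (FreeMagma (Fin n))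
  | FreeMagma.of i => {FreeMagma.of i}
  | FreeMagma.mul x y =>
      (variants x).bind fun x' => (variants y).bind fun y' =>
        {FreeMagma.mul x' y', FreeMagma.mul y' x'}

/-- The underlying module of the algebra `A'_d(R)`: arrays `x[i,j,k]` with
`i, j ∈ Fin (d+1)`, `k ∈ Fin d` (zero-based; the paper's indices are shifted by one). -/
def Arr (d : ℕ) (R : Type*) : Type _ := Fin (d + 1) → Fin (d + 1) → Fin d → R

namespace Arr

variable {d : ℕ} {R : Type*}

instance instAddCommGroup [AddCommGroup R] : AddCommGroup (Arr d R) :=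
  inferInstanceAs (AddCommGroup (Fin (d + 1) → Fin (d + 1) → Fin d → R))

instance instModule {S : Type*} [Semiring S] [AddCommGroup R] [Module S R] :
    Module S (Arr d R) :=
  inferInstanceAs (Module S (Fin (d + 1) → Fin (d + 1) → Fin d → R))

/-- The bilinear product `∘` of `A'_d(R)`:
`(x ∘ y)[i,j,k] = ∑_{l} x[i,l,k+1] * y[l,j,k+1]` if `k+1` is a legal third index, else `0`. -/
def aprod [CommRing R] (x y : Arr d R) : Arr d R := fun i j k =>
  if h : (k : ℕ) + 1 < d then
    ∑ l : Fin (d + 1), x i l ⟨(k : ℕ) + 1, h⟩ * y l j ⟨(k : ℕ) + 1, h⟩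
  else 0

instance instMul [CommRing R] : Mul (Arr d R) := ⟨aprod⟩

end Arr

/-- The algebra `C'_d(R)`: same underlying module as `A'_d(R)`, with the anticommutator
product `a ⊙ b = a ∘ b + b ∘ a`. -/
def CArr (d : ℕ) (R : Type*) : Type _ := Arr d R

namespace CArr

variable {d : ℕ} {R : Type*}

/-- The identity map `A'_d(R) → C'_d(R)` of underlying modules. -/
def ofArr (x : Arr d R) : CArr d R := x

/-- The identity map `C'_d(R) → A'_d(R)` of underlying modules. -/
def toArr (x : CArr d R) : Arr d R := x

instance instAddCommGroup [AddCommGroup R] : AddCommGroup (CArr d R) :=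
  inferInstanceAs (AddCommGroup (Arr d R))

instance instModule {S : Type*} [Semiring S] [AddCommGroup R] [Module S R] :
    Module S (CArr d R) :=
  inferInstanceAs (Module S (Arr d R))

instance instMul [CommRing R] : Mul (CArr d R) :=
  ⟨fun a b => ofArr (toArr a * toArr b + toArr b * toArr a)⟩

end CArr

/-- The element `Z_i ∈ A'_d(R)`, `R = MvPolynomial (Fin n × Fin d × Fin d) F`, whose
`(j, j+1, k)` entry is the indeterminate `z_{i,j,k}` and whose other entries vanish. -/
def Z (F : Type*) [CommRing F] (n d : ℕ) (i : Fin n) :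
    Arr d (MvPolynomial (Fin n × Fin d × Fin d) F) := fun j j' k =>
  if h : (j : ℕ) < d ∧ (j' : ℕ) = (j : ℕ) + 1 then
    MvPolynomial.X (i, ⟨(j : ℕ), h.1⟩, k)
  else 0

/-- The element `Z_i` regarded as an element of `C'_d(R)`. -/
def ZC (F : Type*) [CommRing F] (n d : ℕ) (i : Fin n) :
    CArr d (MvPolynomial (Fin n × Fin d × Fin d) F) := CArr.ofArr (Z F n d i)

/-- The monomial `∏_{t=1}^{d'} z_{σ_m(t), (t-1) + k1, (l^m_t - 1) + k2}` associated to a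
nonassociative monomial `m` of degree `d'` and offsets `k1, k2` (all indices zero-based; the
paper's 1-based offsets are `k1 + 1`, `k2 + 1`).  Indices which would fall out of range are
discarded (this never happens in the intended range of parameters). -/
def monProd (F : Type*) [CommRing F] {n : ℕ} (d : ℕ) (k1 k2 : ℕ) (m : FreeMagma (Fin n)) :
    MvPolynomial (Fin n × Fin d × Fin d) F :=
  ((((leafData m 1).zipIdx).map Prod.swap).map fun p =>
    if h : p.1 + k1 < d ∧ p.2.2 - 1 + k2 < d then
      MvPolynomial.X (p.2.1, ⟨p.1 + k1, h.1⟩, ⟨p.2.2 - 1 + k2, h.2⟩)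
    else 0).prod

/-- `ψ(m) = ∑_ε ∏_{t=1}^{d'} z_{σ_{m_ε}(t), t, l^{m_ε}_t}` (1-based), the sum running over all
choices `ε` of a Boolean for each internal node of `m`. -/
def psi (F : Type*) [CommRing F] {n : ℕ} (d : ℕ) (m : FreeMagma (Fin n)) :
    MvPolynomial (Fin n × Fin d × Fin d) F :=
  ((variants m).map fun m' => monProd F d 0 0 m').sum

/-- The coefficient function of an element of the free nonunital nonassociative algebra. -/
def coeffOf {F : Type*} [Semiring F] {n : ℕ}
    (f : FreeNonUnitalNonAssocAlgebra F (Fin n)) : FreeMagma (Fin n) →₀ F := f.coeff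

/-- Evaluation of an element of the free nonunital nonassociative algebra on `x_1, …, x_n` at
the tuple `b`, with `mul` as the product of the target: the linear extension of
`m ↦ evalWith mul b m`, i.e. the unique nonunital `F`-algebra homomorphism sending
`x_i ↦ b i` into `(A, mul)`. -/
def evalNAWith {F : Type*} [Semiring F] {n : ℕ} {A : Type*}
    [AddCommMonoid A] [Module F A] (mul : A → A → A) (b : Fin n → A)
    (f : FreeNonUnitalNonAssocAlgebra F (Fin n)) : A :=
  Finsupp.sum (coeffOf f) fun m c => c • evalWith mul b m

/-- Evaluation of an element of the free nonunital nonassociative algebra at a tuple `b` of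
elements of a (not necessarily unital/associative) algebra `A`: the unique nonunital
`F`-algebra homomorphism sending `x_i ↦ b i`. -/
def evalNA {F : Type*} [Semiring F] {n : ℕ} {A : Type*}
    [AddCommMonoid A] [Mul A] [Module F A] (b : Fin n → A)
    (f : FreeNonUnitalNonAssocAlgebra F (Fin n)) : A :=
  evalNAWith (· * ·) b f

/-- Evaluation of an element of the unitization of the free nonunital nonassociative algebra
at a tuple `b` of elements of the unitization of `A`: the unique unital `F`-algebra
homomorphism sending `x_i ↦ b i` (and the adjoined unit to the unit). -/
def evalUnit {F : Type*} [CommSemiring F] {n : ℕ} {A : Type*}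
    [AddCommMonoid A] [Mul A] [Module F A] (b : Fin n → Unitization F A)
    (f : Unitization F (FreeNonUnitalNonAssocAlgebra F (Fin n))) : Unitization F A :=
  Unitization.inl f.fst + evalNA b f.snd

/-- The commutativity congruence on the free magma: the smallest equivalence relation with
`m₁ * m₂ ≈ m₂ * m₁` and compatible with the product. -/
inductive CommEq {n : ℕ} : FreeMagma (Fin n) → FreeMagma (Fin n) → Prop
  | refl (m : FreeMagma (Fin n)) : CommEq m m
  | symm {a b : FreeMagma (Fin n)} : CommEq a b → CommEq b a
  | trans {a b c : FreeMagma (Fin n)} : CommEq a b → CommEq b c → CommEq a c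
  | comm (a b : FreeMagma (Fin n)) : CommEq (a * b) (b * a)
  | mul_congr {a a' b b' : FreeMagma (Fin n)} :
      CommEq a a' → CommEq b b' → CommEq (a * b) (a' * b')

/-- The basis monomial `m` of the free nonunital nonassociative algebra. -/
def single1 (F : Type*) [Semiring F] {n : ℕ} (m : FreeMagma (Fin n)) :
    FreeNonUnitalNonAssocAlgebra F (Fin n) :=
  MonoidAlgebra.ofCoeff (Finsupp.single m 1 : FreeMagma (Fin n) →₀ F)

/-- `I_comm`: the `F`-linear span of `{m − m' : m ≈ m'}` inside the free nonunital
nonassociative algebra. -/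
def Icomm (F : Type*) [Field F] (n : ℕ) :
    Submodule F (FreeNonUnitalNonAssocAlgebra F (Fin n)) :=
  Submodule.span F
    {x | ∃ m m' : FreeMagma (Fin n), CommEq m m' ∧ x = single1 F m - single1 F m'}

/-! The entry `(j, j + deg m, k)` of the `∘`-evaluation of a monomial `m` at the `Z_i` is the
product of the variables `z_{label, position, level}` over the leaves of `m`, positions counted from
`j` and levels from `k`. A binary tree is determined by the sequence of levels of its leaves, and
since the positions are consecutive this sequence can be read off the product; so distinct monomials
give distinct monomials in the `z`. Under `⊙` a monomial `m` evaluates to the sum of the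
`∘`-evaluations of its variants `m_ε`, all of which are `≈ m`. Hence, for a class `[m₀]` on which
`f` has nonzero total coefficient `c`, the coefficient of the `z`-monomial of `m₀` in the entry
`(0, deg m₀, 0)` of `f(Z)` is `c` times the multiplicity of `m₀` among its own variants, which is
nonzero in characteristic `0`; the entry exists because `deg m₀ ≤ d`. -/

section FreeMagma

variable {n : ℕ}

@[simp] lemma degM_mul (x y : FreeMagma (Fin n)) : degM (x * y) = degM x + degM y := rfl

@[simp] lemma evalWith_mul {A : Type*} (mul : A → A → A) (b : Fin n → A)
    (x y : FreeMagma (Fin n)) :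
    evalWith mul b (x * y) = mul (evalWith mul b x) (evalWith mul b y) := rfl

@[simp] lemma variants_mul (x y : FreeMagma (Fin n)) :
    variants (x * y) = (variants x).bind fun x' => (variants y).bind fun y' => {x' * y', y' * x'} :=
  rfl

lemma one_le_degM (m : FreeMagma (Fin n)) : 1 ≤ degM m := by
  induction m with
  | ih1 => rfl
  | ih2 x y ihx _ => simp only [degM_mul]; omega

lemma mem_variants_self (m : FreeMagma (Fin n)) : m ∈ variants m := by
  induction m with
  | ih1 => exact Multiset.mem_singleton_self _
  | ih2 x y ihx ihy =>
    simp only [variants_mul, Multiset.mem_bind]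
    exact ⟨x, ihx, y, ihy, by simp⟩

lemma CommEq.of_mem_variants {m m' : FreeMagma (Fin n)} (h : m' ∈ variants m) : CommEq m m' := by
  induction m generalizing m' with
  | ih1 => rw [Multiset.mem_singleton.mp h]; exact .refl _
  | ih2 x y ihx ihy =>
    simp only [variants_mul, Multiset.mem_bind, Multiset.insert_eq_cons,
      Multiset.mem_cons, Multiset.mem_singleton] at h
    obtain ⟨x', hx', y', hy', rfl | rfl⟩ := h
    · exact .mul_congr (ihx hx') (ihy hy')
    · exact .trans (.mul_congr (ihx hx') (ihy hy')) (.comm _ _)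

lemma CommEq.variants_eq {a b : FreeMagma (Fin n)} (h : CommEq a b) : variants a = variants b := by
  induction h with
  | refl => rfl
  | symm _ ih => exact ih.symm
  | trans _ _ ih₁ ih₂ => exact ih₁.trans ih₂
  | comm a b =>
    simp only [variants_mul, Multiset.insert_eq_cons]
    rw [Multiset.bind_bind]
    exact Multiset.bind_congr fun _ _ => Multiset.bind_congr fun _ _ => Multiset.cons_swap _ _ _
  | mul_congr _ _ ih₁ ih₂ => simp only [variants_mul, ih₁, ih₂]

open scoped Classical in
lemma count_variants (m m₀ : FreeMagma (Fin n)) :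
    (variants m).count m₀ = if CommEq m m₀ then (variants m₀).count m₀ else 0 := by
  split_ifs with h
  · rw [h.variants_eq]
  · exact Multiset.count_eq_zero.mpr fun hm₀ => h (.of_mem_variants hm₀)

/-- The leaves of `m` as triples `(label, position, level)`, positions counted from `j` and levels
from `k`. -/
def leaves : FreeMagma (Fin n) → ℕ → ℕ → List (Fin n × ℕ × ℕ)
  | .of i, j, k => [(i, j, k)]
  | .mul x y, j, k => leaves x j (k + 1) ++ leaves y (j + degM x) (k + 1)

@[simp] lemma leaves_mul (x y : FreeMagma (Fin n)) (j k : ℕ) :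
    leaves (x * y) j k = leaves x j (k + 1) ++ leaves y (j + degM x) (k + 1) := rfl

lemma leaves_ne_nil (m : FreeMagma (Fin n)) (j k : ℕ) : leaves m j k ≠ [] := by
  cases m <;> simp [leaves, leaves_ne_nil]

lemma level_mem_Ico_of_mem_leaves {m : FreeMagma (Fin n)} {j k : ℕ} {v : Fin n × ℕ × ℕ}
    (hv : v ∈ leaves m j k) : k ≤ v.2.2 ∧ v.2.2 < k + degM m := by
  induction m generalizing j k with
  | ih1 => rw [List.mem_singleton.mp hv]; simp [degM]
  | ih2 x y ihx ihy =>
    have := one_le_degM x; have := one_le_degM y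
    simp only [leaves_mul, List.mem_append] at hv
    rcases hv with hv | hv
    · have := ihx hv; simp only [degM_mul]; omega
    · have := ihy hv; simp only [degM_mul]; omega

lemma map_position_leaves (m : FreeMagma (Fin n)) (j k : ℕ) :
    (leaves m j k).map (·.2.1) = List.range' j (degM m) := by
  induction m generalizing j k with
  | ih1 => rfl
  | ih2 x y ihx ihy => simp [ihx, ihy]

lemma position_lt_of_mem_leaves {m : FreeMagma (Fin n)} {j k : ℕ} {v : Fin n × ℕ × ℕ}
    (hv : v ∈ leaves m j k) : v.2.1 < j + degM m := by
  have := List.mem_map_of_mem (f := (·.2.1)) hv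
  rw [map_position_leaves, List.mem_range'_1] at this
  exact this.2

lemma leaves_of_append_ne_leaves_mul_append (i : Fin n) (x y : FreeMagma (Fin n)) (j k : ℕ)
    (L L' : List (Fin n × ℕ × ℕ)) : leaves (.of i) j k ++ L ≠ leaves (x * y) j k ++ L' := by
  obtain ⟨v, t, hvt⟩ := List.exists_cons_of_ne_nil (leaves_ne_nil x j (k + 1))
  have hv := (level_mem_Ico_of_mem_leaves (hvt ▸ List.mem_cons_self : v ∈ leaves x j (k + 1))).1
  intro h
  simp only [leaves, hvt, List.cons_append, List.nil_append, List.cons.injEq] at h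
  rw [← h.1] at hv
  simp at hv

/-- The leaves form a prefix code: a list of leaves determines where the tree ends. -/
lemma eq_of_leaves_append_eq :
    ∀ {m m' : FreeMagma (Fin n)} {j k : ℕ} {L L' : List (Fin n × ℕ × ℕ)},
      leaves m j k ++ L = leaves m' j k ++ L' → m = m' ∧ L = L'
  | .of i, .of i', j, k, L, L', h => by
    simp only [leaves, List.cons_append, List.nil_append, List.cons.injEq, Prod.mk.injEq] at h
    exact ⟨congrArg _ h.1.1, h.2⟩
  | .of i, .mul x' y', j, k, L, L', h =>
    (leaves_of_append_ne_leaves_mul_append i x' y' j k L L' h).elim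
  | .mul x y, .of i', j, k, L, L', h =>
    (leaves_of_append_ne_leaves_mul_append i' x y j k L' L h.symm).elim
  | .mul x y, .mul x' y', j, k, L, L', h => by
    simp only [leaves, List.append_assoc] at h
    obtain ⟨rfl, h⟩ := eq_of_leaves_append_eq h
    obtain ⟨rfl, rfl⟩ := eq_of_leaves_append_eq h
    exact ⟨rfl, rfl⟩

lemma eq_of_leaves_perm {m m' : FreeMagma (Fin n)} {j k : ℕ}
    (h : (leaves m j k).Perm (leaves m' j k)) : m = m' := by
  have sorted (m : FreeMagma (Fin n)) :
      (leaves m j k).Pairwise fun v w => v.2.1 < w.2.1 := by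
    simpa [← List.pairwise_map, map_position_leaves] using
      List.pairwise_lt_range' (s := j) (n := degM m)
  have hlist := h.eq_of_pairwise (fun _ _ _ _ h₁ h₂ => absurd h₁ (lt_asymm h₂)) (sorted m)
    (sorted m')
  exact (eq_of_leaves_append_eq (L := []) (L' := []) (by simpa using hlist)).1

end FreeMagma

namespace Arr

variable {R : Type*} [CommRing R] {d : ℕ}

lemma add_apply (x y : Arr d R) (i j : Fin (d + 1)) (k : Fin d) :
    (x + y) i j k = x i j k + y i j k := rfl

lemma zero_apply (i j : Fin (d + 1)) (k : Fin d) : (0 : Arr d R) i j k = 0 := rfl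

lemma mul_apply (x y : Arr d R) (i j : Fin (d + 1)) (k : Fin d) :
    (x * y) i j k = if h : (k : ℕ) + 1 < d then
      ∑ l : Fin (d + 1), x i l ⟨k + 1, h⟩ * y l j ⟨k + 1, h⟩ else 0 := rfl

instance : NonUnitalNonAssocRing (Arr d R) where
  left_distrib a b c := by
    funext i j k
    rw [add_apply, mul_apply, mul_apply, mul_apply]
    split_ifs <;> simp [add_apply, mul_add, Finset.sum_add_distrib]
  right_distrib a b c := by
    funext i j k
    rw [add_apply, mul_apply, mul_apply, mul_apply]
    split_ifs <;> simp [add_apply, add_mul, Finset.sum_add_distrib]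
  zero_mul a := by
    funext i j k
    rw [mul_apply]
    split_ifs <;> simp [zero_apply]
  mul_zero a := by
    funext i j k
    rw [mul_apply]
    split_ifs <;> simp [zero_apply]

end Arr

section Evaluation

open MvPolynomial

variable {F : Type*} [CommRing F] {n d : ℕ}

/-- The variable `z_v` of `R`, or `0` if an index of `v` is out of range. -/
def zVar (F : Type*) [CommRing F] (d : ℕ) (v : Fin n × ℕ × ℕ) :
    MvPolynomial (Fin n × Fin d × Fin d) F :=
  if h : v.2.1 < d ∧ v.2.2 < d then X (v.1, ⟨v.2.1, h.1⟩, ⟨v.2.2, h.2⟩) else 0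

lemma Z_apply (i : Fin n) (j j' : Fin (d + 1)) (k : Fin d) :
    Z F n d i j j' k = if (j' : ℕ) = j + 1 then zVar F d (i, j, k) else 0 := by
  unfold Z zVar
  by_cases hj' : (j' : ℕ) = j + 1
  · rw [dif_pos ⟨by omega, hj'⟩, if_pos hj',
      dif_pos (show (j : ℕ) < d ∧ (k : ℕ) < d from ⟨by omega, k.isLt⟩)]
  · rw [dif_neg (fun h => hj' h.2), if_neg hj']

lemma prod_zVar_leaves_eq_zero (m : FreeMagma (Fin n)) (j : ℕ) {k : ℕ} (hk : d ≤ k) :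
    ((leaves m j k).map (zVar F d)).prod = 0 := by
  obtain ⟨v, t, hvt⟩ := List.exists_cons_of_ne_nil (leaves_ne_nil m j k)
  have hv := (level_mem_Ico_of_mem_leaves (hvt ▸ List.mem_cons_self : v ∈ leaves m j k)).1
  rw [hvt, List.map_cons, List.prod_cons, zVar, dif_neg (by omega), zero_mul]

lemma evalWith_Z_apply (m : FreeMagma (Fin n)) (j j' : Fin (d + 1)) (k : Fin d) :
    evalWith (· * ·) (Z F n d) m j j' k =
      if (j' : ℕ) = j + degM m then ((leaves m j k).map (zVar F d)).prod else 0 := by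
  induction m generalizing j j' k with
  | ih1 i => simp [evalWith, Z_apply, leaves, degM]
  | ih2 x y ihx ihy =>
    have := one_le_degM y
    rw [evalWith_mul, Arr.mul_apply]
    split_ifs with hk hj'
    · simp only [degM_mul] at hj'
      simp only [ihx, ihy, ite_mul, zero_mul]
      rw [Fintype.sum_eq_single ⟨j + degM x, by omega⟩
        fun l hl => if_neg fun h => hl (Fin.ext h)]
      simp [hj', add_assoc]
    · refine Finset.sum_eq_zero fun l _ => ?_
      simp only [ihx, ihy, degM_mul] at hj' ⊢
      split_ifs <;> first | omega | simp
    · rw [leaves_mul, List.map_append, List.prod_append,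
        prod_zVar_leaves_eq_zero x j (by omega), zero_mul]
    · rfl

lemma evalWith_ZC (m : FreeMagma (Fin n)) :
    evalWith (· * ·) (ZC F n d) m =
      CArr.ofArr ((variants m).map (evalWith (· * ·) (Z F n d))).sum := by
  induction m with
  | ih1 => simp [evalWith, variants, ZC]
  | ih2 x y ihx ihy =>
    rw [evalWith_mul, ihx, ihy]
    change CArr.ofArr (_ * _ + _ * _) = _
    simp only [variants_mul, Multiset.map_bind, Multiset.sum_bind, Multiset.insert_eq_cons,
      Multiset.map_cons, Multiset.map_singleton, Multiset.sum_cons, Multiset.sum_singleton,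
      evalWith_mul, Multiset.sum_map_add, Multiset.sum_map_mul_left, Multiset.sum_map_mul_right]
    rfl

/-- Renaming along `indexVal` lets `z`-monomials be compared as multisets of leaves. -/
def indexVal (n d : ℕ) : Fin n × Fin d × Fin d → Fin n × ℕ × ℕ :=
  Prod.map id (Prod.map Fin.val Fin.val)

lemma rename_prod_zVar {L : List (Fin n × ℕ × ℕ)}
    (hL : ∀ v ∈ L, v.2.1 < d ∧ v.2.2 < d) :
    rename (indexVal n d) ((L.map (zVar F d)).prod) =
      monomial (Multiset.toFinsupp (L : Multiset (Fin n × ℕ × ℕ))) 1 := by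
  classical
  induction L with
  | nil => simp
  | cons v L ih =>
    rw [List.map_cons, List.prod_cons, map_mul, ih fun w hw => hL w (List.mem_cons_of_mem _ hw),
      zVar, dif_pos (hL v List.mem_cons_self), rename_X, ← Multiset.cons_coe,
      ← Multiset.singleton_add, Multiset.toFinsupp_add, Multiset.toFinsupp_singleton, X,
      monomial_mul, one_mul]
    rfl

end Evaluation

section CommClasses

variable {F : Type*} {n : ℕ}

def commSetoid (n : ℕ) : Setoid (FreeMagma (Fin n)) :=
  ⟨CommEq, ⟨.refl, .symm, .trans⟩⟩

/-- The coefficients of the image of `f` in `F_{Ā,C}[X]`, indexed by `≈`-classes. -/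
def commClass [Semiring F] (f : FreeNonUnitalNonAssocAlgebra F (Fin n)) :
    Quotient (commSetoid n) →₀ F :=
  (coeffOf f).mapDomain (Quotient.mk _)

open scoped Classical in
lemma commClass_apply [Semiring F] (f : FreeNonUnitalNonAssocAlgebra F (Fin n))
    (m₀ : FreeMagma (Fin n)) :
    commClass f (Quotient.mk _ m₀) =
      (coeffOf f).sum fun m c => if CommEq m m₀ then c else 0 := by
  simp only [commClass, Finsupp.mapDomain, Finsupp.sum_apply, Finsupp.single_apply]
  exact Finsupp.sum_congr fun m _ => if_congr Quotient.eq rfl rfl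

lemma sum_coeffOf_smul_single1 [Semiring F] (f : FreeNonUnitalNonAssocAlgebra F (Fin n)) :
    (coeffOf f).sum (fun m c => c • single1 F m) = f := by
  simp only [single1, MonoidAlgebra.ofCoeff_single, MonoidAlgebra.smul_single', mul_one]
  exact MonoidAlgebra.sum_coeff_single f

/-- Subtracting from each monomial a fixed representative of its class lands in `I_comm`, and what
remains is a combination of the representatives with the coefficients `commClass f`. -/
lemma mem_Icomm_of_commClass_eq_zero [Field F] {f : FreeNonUnitalNonAssocAlgebra F (Fin n)}
    (h : commClass f = 0) : f ∈ Icomm F n := by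
  let rep : FreeMagma (Fin n) → FreeMagma (Fin n) := fun m => (Quotient.mk (commSetoid n) m).out
  have hrep : ((commClass f).sum fun q c => c • single1 F q.out) =
      (coeffOf f).sum fun m c => c • single1 F (rep m) :=
    Finsupp.sum_mapDomain_index (fun _ => zero_smul F _) fun _ _ _ => add_smul _ _ _
  have hsplit : f = (coeffOf f).sum (fun m c => c • (single1 F m - single1 F (rep m))) +
      (commClass f).sum fun q c => c • single1 F q.out := by
    rw [hrep, ← Finsupp.sum_add]
    simp only [smul_sub, sub_add_cancel]
    exact (sum_coeffOf_smul_single1 f).symm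
  rw [hsplit, h, Finsupp.sum_zero_index, add_zero]
  exact Submodule.finsuppSum_mem _ _ _ _ fun m _ => Submodule.smul_mem _ _ <|
    Submodule.subset_span ⟨m, rep m, CommEq.symm (Quotient.mk_out (s := commSetoid n) m), rfl⟩

lemma exists_commClass_ne_zero [Field F] {f : FreeNonUnitalNonAssocAlgebra F (Fin n)}
    (hI : f ∉ Icomm F n) :
    ∃ m₀ ∈ (coeffOf f).support, commClass f (Quotient.mk _ m₀) ≠ 0 := by
  classical
  obtain ⟨q, hq⟩ := Finsupp.support_nonempty_iff.mpr (mt mem_Icomm_of_commClass_eq_zero hI)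
  obtain ⟨m₀, hm₀, rfl⟩ := Finset.mem_image.mp (Finsupp.mapDomain_support hq)
  exact ⟨m₀, hm₀, Finsupp.mem_support_iff.mp hq⟩

open scoped Classical in
lemma sum_coeffOf_mul_count_variants [CommSemiring F] (f : FreeNonUnitalNonAssocAlgebra F (Fin n))
    (m₀ : FreeMagma (Fin n)) :
    ((coeffOf f).sum fun m c => c * (variants m).count m₀) =
      (variants m₀).count m₀ * commClass f (Quotient.mk _ m₀) := by
  rw [commClass_apply, Finsupp.mul_sum]
  refine Finsupp.sum_congr fun m _ => ?_
  rw [count_variants]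
  split_ifs <;> simp [mul_comm]

end CommClasses

def Arr.entry {S R : Type*} [Semiring S] [AddCommGroup R] [Module S R] {d : ℕ}
    (j j' : Fin (d + 1)) (k : Fin d) : Arr d R →ₗ[S] R where
  toFun x := x j j' k
  map_add' _ _ := rfl
  map_smul' _ _ := rfl

section Coefficients

open MvPolynomial
open scoped Classical

variable {F : Type*} [CommRing F] {n d : ℕ}

lemma coeff_rename_evalWith_Z_apply (m m₀ : FreeMagma (Fin n)) (j j' : Fin (d + 1)) (k : Fin d)
    (hj' : (j' : ℕ) = j + degM m₀) (hk : (k : ℕ) + degM m₀ ≤ d) :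
    coeff (Multiset.toFinsupp (leaves m₀ j k : Multiset _))
        (rename (indexVal n d) (evalWith (· * ·) (Z F n d) m j j' k)) =
      if m = m₀ then 1 else 0 := by
  rw [evalWith_Z_apply]
  by_cases hdeg : degM m = degM m₀
  · have hbounds (v) (hv : v ∈ leaves m j k) : v.2.1 < d ∧ v.2.2 < d := by
      have := position_lt_of_mem_leaves hv
      have := level_mem_Ico_of_mem_leaves hv
      omega
    rw [if_pos (by omega), rename_prod_zVar hbounds, coeff_monomial]
    refine if_congr ⟨fun h => ?_, fun h => by rw [h]⟩ rfl rfl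
    exact eq_of_leaves_perm (Multiset.coe_eq_coe.mp (Multiset.toFinsupp.injective h))
  · rw [if_neg (by omega), map_zero, coeff_zero, if_neg fun h => hdeg (by rw [h])]

lemma coeff_rename_evalWith_ZC_apply (m m₀ : FreeMagma (Fin n)) (j j' : Fin (d + 1))
    (k : Fin d) (hj' : (j' : ℕ) = j + degM m₀) (hk : (k : ℕ) + degM m₀ ≤ d) :
    coeff (Multiset.toFinsupp (leaves m₀ j k : Multiset _))
        (rename (indexVal n d) (evalWith (· * ·) (ZC F n d) m j j' k)) =
      (variants m).count m₀ := by
  have hentry : evalWith (· * ·) (ZC F n d) m j j' k =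
      ((variants m).map fun m' => evalWith (· * ·) (Z F n d) m' j j' k).sum := by
    rw [evalWith_ZC]
    exact (map_multiset_sum (Arr.entry (S := F) j j' k) _).trans (by rw [Multiset.map_map]; rfl)
  rw [hentry, map_multiset_sum, ← lcoeff_apply, map_multiset_sum, Multiset.map_map,
    Multiset.map_map]
  simp only [Function.comp_apply, lcoeff_apply, coeff_rename_evalWith_Z_apply _ _ _ _ _ hj' hk]
  rw [Multiset.sum_map_eq_nsmul_single m₀ fun m' hm' _ => if_neg hm', if_pos rfl, nsmul_one]

lemma coeff_rename_evalNA_ZC_apply (f : FreeNonUnitalNonAssocAlgebra F (Fin n))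
    (m₀ : FreeMagma (Fin n)) (j j' : Fin (d + 1)) (k : Fin d) (hj' : (j' : ℕ) = j + degM m₀)
    (hk : (k : ℕ) + degM m₀ ≤ d) :
    coeff (Multiset.toFinsupp (leaves m₀ j k : Multiset _))
        (rename (indexVal n d) (evalNA (ZC F n d) f j j' k)) =
      (variants m₀).count m₀ * commClass f (Quotient.mk _ m₀) := by
  let Φ := lcoeff F (Multiset.toFinsupp (leaves m₀ j k : Multiset _)) ∘ₗ
    (rename (indexVal n d)).toLinearMap ∘ₗ Arr.entry j j' k
  change Φ ((coeffOf f).sum fun m c => c • CArr.toArr (evalWith (· * ·) (ZC F n d) m)) = _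
  rw [map_finsuppSum, ← sum_coeffOf_mul_count_variants]
  refine Finsupp.sum_congr fun m _ => ?_
  rw [map_smul, smul_eq_mul]
  exact congrArg _ (coeff_rename_evalWith_ZC_apply m m₀ j j' k hj' hk)

end Coefficients

theorem anticommutator_eval_free_at_Z_ne_zero_general {F : Type*} [Field F] [CharZero F] (n d : ℕ)
    (f : FreeNonUnitalNonAssocAlgebra F (Fin n))
    (hdeg : ∀ m ∈ (coeffOf f).support, degM m ≤ d)
    (hI : f ∉ Icomm F n) :
    evalNA (ZC F n d) f ≠ 0 := by
  obtain ⟨m₀, hm₀, hclass⟩ := exists_commClass_ne_zero hI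
  have hm₀d := hdeg m₀ hm₀
  have hm₀pos := one_le_degM m₀
  have hcount : ((variants m₀).count m₀ : F) ≠ 0 :=
    Nat.cast_ne_zero.mpr (Multiset.count_ne_zero.mpr (mem_variants_self m₀))
  intro h
  have key := coeff_rename_evalNA_ZC_apply f m₀ (0 : Fin (d + 1)) ⟨degM m₀, by omega⟩
    (⟨0, by omega⟩ : Fin d) (by simp) (by simpa using hm₀d)
  rw [h] at key
  change MvPolynomial.coeff _ (MvPolynomial.rename _ 0) = _ at key
  rw [map_zero, MvPolynomial.coeff_zero] at key
  exact mul_ne_zero hcount hclass key.symm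

/-- Lemma 3.6, nonunital form.  Let `F` be a field of characteristic `0`
and `n, d ≥ 1`.  Let `f ∈ F_{Ā,C̄}[X]` have degree `≤ d` and suppose `f ∉ I_comm` (i.e. the
image of `f` in the free commutative nonassociative algebra `F_{Ā,C}[X] = F_{Ā,C̄}[X]/I_comm`
is nonzero).  Then the evaluation of `f` at `(Z_1, …, Z_n)` in `C'_d(R)` under the
anticommutator product `⊙` (the unique nonunital `F`-algebra homomorphism sending
`x_i ↦ Z_i`) is nonzero. -/
theorem anticommutator_eval_free_at_Z_ne_zero {F : Type*} [Field F] [CharZero F] (n d : ℕ)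
    (hn : 1 ≤ n) (hd : 1 ≤ d)
    (f : FreeNonUnitalNonAssocAlgebra F (Fin n))
    (hdeg : ∀ m ∈ (coeffOf f).support, degM m ≤ d)
    (hI : f ∉ Icomm F n) :
    evalNA (ZC F n d) f ≠ 0 :=
  anticommutator_eval_free_at_Z_ne_zero_general n d f hdeg hI

end NAPIT
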